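/- arXiv:2302.13977 — 6 statements merged into one kernel-verified Lean document; each statement's English description precedes it below -/
import Mathlib

section
/- Let c_p > c_v > 0 be real constants, ι a finite index set, and ω, ρ0 : ι → ℝ with ω_i > 0 and ρ0_i > 0 for all i. For each i ∈ ι let θ_i, J_i : ℝ → ℝ be differentiable with θ_i(t) > 0, J_i(t) > 0 and J_i'(t) = J_i(t)·D_i(t) for all t, and let W_i : ℝ → ℝ satisfy W_i(t) ≥ 0 for all t. Suppose the semi-discrete internal energy equations hold: c_v·ρ0_i·θ_i'(t) = −(c_p − c_v)·ρ0_i·D_i(t)·θ_i(t) + W_i(t) for all i and t. Define s_i(t) = c_v·log(θ_i(t)) − (c_p − c_v)·log(ρ0_i / J_i(t)) + c_v and the total entropy S(t) = Σ_{i∈ι} ω_i·ρ0_i·s_i(t). Then S is differentiable with S'(t) = Σ_{i∈ι} ω_i·W_i(t)/θ_i(t) ≥ 0 for all t; in particular the total discrete entropy is nondecreasing. -/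
/-!
At each quadrature point the density is `ρ0 / J`, so `ds/dt = c_v θ'/θ + (c_p - c_v) J'/J`.
Substituting `J' = J D` and the internal energy equation turns `ρ0 ds/dt` into `W/θ`:
the pressure work `(c_p - c_v) ρ0 D θ` cancels, and only the viscous heating survives,
which is nonnegative.
-/

open Real

theorem HasDerivAt.log_const_div {f : ℝ → ℝ} {f' c t : ℝ} (hf : HasDerivAt f f' t)
    (hft : f t ≠ 0) (hc : c ≠ 0) :
    HasDerivAt (fun u => Real.log (c / f u)) (-(f' / f t)) t := by
  have h := ((hf.inv hft).const_mul c).log (mul_ne_zero hc (inv_ne_zero hft))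
  convert h using 1
  · simp only [div_eq_mul_inv, Pi.inv_apply]
  · simp only [Pi.inv_apply]
    field_simp

theorem hasDerivAt_idealGas_entropy {θ J : ℝ → ℝ} {θ' J' ρ0 t : ℝ} (cp cv : ℝ)
    (hθ : HasDerivAt θ θ' t) (hJ : HasDerivAt J J' t)
    (hθt : θ t ≠ 0) (hJt : J t ≠ 0) (hρ0 : ρ0 ≠ 0) :
    HasDerivAt (fun u => cv * log (θ u) - (cp - cv) * log (ρ0 / J u) + cv)
      (cv * (θ' / θ t) + (cp - cv) * (J' / J t)) t := by
  have h := (((hθ.log hθt).const_mul cv).sub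
    ((hJ.log_const_div hJt hρ0).const_mul (cp - cv))).add_const cv
  exact h.congr_deriv (by ring)

theorem idealGas_entropy_production {cp cv ρ0 θ θ' J J' D W : ℝ} (hθ : θ ≠ 0) (hJ : J ≠ 0)
    (hJ' : J' = J * D)
    (henergy : cv * ρ0 * θ' = -(cp - cv) * ρ0 * D * θ + W) :
    ρ0 * (cv * (θ' / θ) + (cp - cv) * (J' / J)) = W / θ := by
  rw [hJ', mul_div_cancel_left₀ D hJ]
  field_simp
  linear_combination henergy

theorem semidiscrete_entropy_stability_general
    (cp cv : ℝ)
    (ι : Type*) [Fintype ι]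
    (ω ρ0 : ι → ℝ) (hω : ∀ i, 0 < ω i) (hρ0 : ∀ i, 0 < ρ0 i)
    (θ J D W : ι → ℝ → ℝ)
    (hθdiff : ∀ i, Differentiable ℝ (θ i)) (hJdiff : ∀ i, Differentiable ℝ (J i))
    (hθpos : ∀ i t, 0 < θ i t) (hJpos : ∀ i t, 0 < J i t)
    (hJD : ∀ i t, deriv (J i) t = J i t * D i t)
    (hW : ∀ i t, 0 ≤ W i t)
    (hinternal : ∀ i t, cv * ρ0 i * deriv (θ i) t
        = -(cp - cv) * ρ0 i * D i t * θ i t + W i t)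
    (s : ι → ℝ → ℝ)
    (hs : ∀ i t, s i t = cv * Real.log (θ i t)
        - (cp - cv) * Real.log (ρ0 i / J i t) + cv)
    (S : ℝ → ℝ)
    (hS : ∀ t, S t = ∑ i, ω i * ρ0 i * s i t) :
    ∀ t, HasDerivAt S (∑ i, ω i * W i t / θ i t) t ∧
      0 ≤ ∑ i, ω i * W i t / θ i t := by
  intro t
  have hcell : ∀ i, HasDerivAt (fun u => ω i * ρ0 i * s i u) (ω i * W i t / θ i t) t := by
    intro i
    have hs_i : s i = fun u => cv * log (θ i u) - (cp - cv) * log (ρ0 i / J i u) + cv :=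
      funext (hs i)
    have hderiv := (hasDerivAt_idealGas_entropy cp cv (hθdiff i t).hasDerivAt
      (hJdiff i t).hasDerivAt (hθpos i t).ne' (hJpos i t).ne' (hρ0 i).ne').const_mul (ω i * ρ0 i)
    rw [hs_i]
    refine hderiv.congr_deriv ?_
    rw [mul_assoc, idealGas_entropy_production (hθpos i t).ne' (hJpos i t).ne' (hJD i t)
      (hinternal i t), mul_div_assoc]
  refine ⟨(funext hS : S = _) ▸ HasDerivAt.fun_sum fun i _ => hcell i, ?_⟩
  exact Finset.sum_nonneg fun i _ => div_nonneg (mul_nonneg (hω i).le (hW i t)) (hθpos i t).le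

/-- semi-discrete entropy stability: the total discrete entropy
`S(t) = Σᵢ ωᵢ ρ0ᵢ sᵢ(t)` satisfies `S'(t) = Σᵢ ωᵢ Wᵢ(t)/θᵢ(t) ≥ 0`. -/
theorem semidiscrete_entropy_stability
    (cp cv : ℝ) (hcv : 0 < cv) (hcpv : cv < cp)
    (ι : Type*) [Fintype ι]
    (ω ρ0 : ι → ℝ) (hω : ∀ i, 0 < ω i) (hρ0 : ∀ i, 0 < ρ0 i)
    (θ J D W : ι → ℝ → ℝ)
    (hθdiff : ∀ i, Differentiable ℝ (θ i)) (hJdiff : ∀ i, Differentiable ℝ (J i))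
    (hθpos : ∀ i t, 0 < θ i t) (hJpos : ∀ i t, 0 < J i t)
    (hJD : ∀ i t, deriv (J i) t = J i t * D i t)
    (hW : ∀ i t, 0 ≤ W i t)
    (hinternal : ∀ i t, cv * ρ0 i * deriv (θ i) t
        = -(cp - cv) * ρ0 i * D i t * θ i t + W i t)
    (s : ι → ℝ → ℝ)
    (hs : ∀ i t, s i t = cv * Real.log (θ i t)
        - (cp - cv) * Real.log (ρ0 i / J i t) + cv)
    (S : ℝ → ℝ)
    (hS : ∀ t, S t = ∑ i, ω i * ρ0 i * s i t) :
    ∀ t, HasDerivAt S (∑ i, ω i * W i t / θ i t) t ∧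
      0 ≤ ∑ i, ω i * W i t / θ i t :=
  semidiscrete_entropy_stability_general cp cv ι ω ρ0 hω hρ0 θ J D W hθdiff hJdiff hθpos hJpos hJD
    hW hinternal s hs S hS
end

section
/- Let c_p > c_v > 0 be real constants, ι a finite index set, and ω, ρ0 : ι → ℝ with ω_i > 0 and ρ0_i > 0 for all i. For each i ∈ ι let u_i : ℝ → ℝ^d and θ_i : ℝ → ℝ be differentiable, and let D_i, W_i : ℝ → ℝ. Assume: (i) the momentum equation tested with the velocity: Σ_{i∈ι} ω_i·ρ0_i·⟨u_i'(t), u_i(t)⟩ = (c_p − c_v)·Σ_{i∈ι} ω_i·ρ0_i·θ_i(t)·D_i(t) − Σ_{i∈ι} ω_i·W_i(t) for all t; and (ii) the pointwise internal energy equations: c_v·ρ0_i·θ_i'(t) = −(c_p − c_v)·ρ0_i·D_i(t)·θ_i(t) + W_i(t) for all i and t. Then the total discrete energy E(t) = Σ_{i∈ι} ω_i·ρ0_i·(½·‖u_i(t)‖² + c_v·θ_i(t)) has zero derivative for all t, hence is constant in time. -/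
/-!
Differentiating `E` term by term, the kinetic part contributes `Σ ωᵢρ0ᵢ⟨uᵢ', uᵢ⟩`, which the
momentum equation turns into the pressure work `(c_p - c_v) Σ ωᵢρ0ᵢθᵢDᵢ` minus the dissipation
`Σ ωᵢWᵢ`; the internal part contributes `Σ ωᵢ c_v ρ0ᵢθᵢ'`, which by the internal energy equations
is exactly the opposite. So `E' = 0` and `E` is constant.
-/

open Finset
open scoped InnerProductSpace

theorem HasDerivAt.half_norm_sq {F : Type*} [NormedAddCommGroup F] [InnerProductSpace ℝ F]
    {f : ℝ → F} {f' : F} {t : ℝ} (hf : HasDerivAt f f' t) :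
    HasDerivAt (fun s => 1 / 2 * ‖f s‖ ^ 2) ⟪f', f t⟫_ℝ t :=
  (hf.norm_sq.const_mul (1 / 2)).congr_deriv (by rw [real_inner_comm]; ring)

theorem hasDerivAt_sum_kinetic_add_internal {ι F : Type*} [Fintype ι] [NormedAddCommGroup F]
    [InnerProductSpace ℝ F] (m : ι → ℝ) (cv : ℝ) {u : ι → ℝ → F} {u' : ι → F}
    {θ : ι → ℝ → ℝ} {θ' : ι → ℝ} {t : ℝ}
    (hu : ∀ i, HasDerivAt (u i) (u' i) t) (hθ : ∀ i, HasDerivAt (θ i) (θ' i) t) :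
    HasDerivAt (fun s => ∑ i, m i * (1 / 2 * ‖u i s‖ ^ 2 + cv * θ i s))
      (∑ i, m i * (⟪u' i, u i t⟫_ℝ + cv * θ' i)) t :=
  HasDerivAt.fun_sum fun i _ =>
    ((hu i).half_norm_sq.add ((hθ i).const_mul cv)).const_mul (m i)

theorem kinetic_add_internal_power_eq_zero {ι F : Type*} [Fintype ι] [NormedAddCommGroup F]
    [InnerProductSpace ℝ F] (cp cv : ℝ) (ω ρ0 : ι → ℝ) (u u' : ι → F) (θ θ' D W : ι → ℝ)
    (hmom : ∑ i, ω i * ρ0 i * ⟪u' i, u i⟫_ℝ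
        = (cp - cv) * ∑ i, ω i * ρ0 i * θ i * D i - ∑ i, ω i * W i)
    (hinternal : ∀ i, cv * ρ0 i * θ' i = -(cp - cv) * ρ0 i * D i * θ i + W i) :
    ∑ i, ω i * ρ0 i * (⟪u' i, u i⟫_ℝ + cv * θ' i) = 0 := by
  have hint : ∑ i, ω i * ρ0 i * (cv * θ' i)
      = -((cp - cv) * ∑ i, ω i * ρ0 i * θ i * D i - ∑ i, ω i * W i) := by
    rw [mul_sum, ← sum_sub_distrib, ← sum_neg_distrib]
    exact sum_congr rfl fun i _ => by linear_combination ω i * hinternal i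
  simp only [mul_add, sum_add_distrib, hmom, hint, add_neg_cancel]

theorem semidiscrete_energy_conservation_general
    (cp cv : ℝ)
    (ι : Type*) [Fintype ι] (d : ℕ)
    (ω ρ0 : ι → ℝ)
    (u : ι → ℝ → EuclideanSpace ℝ (Fin d)) (θ : ι → ℝ → ℝ)
    (hudiff : ∀ i, Differentiable ℝ (u i)) (hθdiff : ∀ i, Differentiable ℝ (θ i))
    (D W : ι → ℝ → ℝ)
    (hmom : ∀ t, ∑ i, ω i * ρ0 i * (inner ℝ (deriv (u i) t) (u i t) : ℝ)
        = (cp - cv) * ∑ i, ω i * ρ0 i * θ i t * D i t - ∑ i, ω i * W i t)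
    (hinternal : ∀ i t, cv * ρ0 i * deriv (θ i) t
        = -(cp - cv) * ρ0 i * D i t * θ i t + W i t)
    (E : ℝ → ℝ)
    (hE : ∀ t, E t = ∑ i, ω i * ρ0 i * ((1 / 2) * ‖u i t‖ ^ 2 + cv * θ i t)) :
    (∀ t, deriv E t = 0) ∧ (∀ t₁ t₂, E t₁ = E t₂) := by
  have hE' : ∀ t, HasDerivAt E 0 t := by
    intro t
    rw [funext hE, ← kinetic_add_internal_power_eq_zero cp cv ω ρ0 (u · t)
      (fun i => deriv (u i) t) (θ · t) (fun i => deriv (θ i) t) (D · t) (W · t)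
      (hmom t) (hinternal · t)]
    exact hasDerivAt_sum_kinetic_add_internal (fun i => ω i * ρ0 i) cv
      (fun i => (hudiff i t).hasDerivAt) (fun i => (hθdiff i t).hasDerivAt)
  exact ⟨fun t => (hE' t).deriv, is_const_of_deriv_eq_zero (fun t => (hE' t).differentiableAt)
    fun t => (hE' t).deriv⟩

/-- semi-discrete total energy conservation: if the momentum
equation tested with the velocity and the pointwise internal energy equations
hold, then the total discrete energy
`E(t) = Σᵢ ωᵢ ρ0ᵢ (½‖uᵢ‖² + c_v θᵢ)` has zero derivative, hence is constant. -/
theorem semidiscrete_energy_conservation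
    (cp cv : ℝ) (hcv : 0 < cv) (hcpv : cv < cp)
    (ι : Type*) [Fintype ι] (d : ℕ)
    (ω ρ0 : ι → ℝ) (hω : ∀ i, 0 < ω i) (hρ0 : ∀ i, 0 < ρ0 i)
    (u : ι → ℝ → EuclideanSpace ℝ (Fin d)) (θ : ι → ℝ → ℝ)
    (hudiff : ∀ i, Differentiable ℝ (u i)) (hθdiff : ∀ i, Differentiable ℝ (θ i))
    (D W : ι → ℝ → ℝ)
    (hmom : ∀ t, ∑ i, ω i * ρ0 i * (inner ℝ (deriv (u i) t) (u i t) : ℝ)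
        = (cp - cv) * ∑ i, ω i * ρ0 i * θ i t * D i t - ∑ i, ω i * W i t)
    (hinternal : ∀ i t, cv * ρ0 i * deriv (θ i) t
        = -(cp - cv) * ρ0 i * D i t * θ i t + W i t)
    (E : ℝ → ℝ)
    (hE : ∀ t, E t = ∑ i, ω i * ρ0 i * ((1 / 2) * ‖u i t‖ ^ 2 + cv * θ i t)) :
    (∀ t, deriv E t = 0) ∧ (∀ t₁ t₂, E t₁ = E t₂) :=
  semidiscrete_energy_conservation_general cp cv ι d ω ρ0 u θ hudiff hθdiff D W hmom hinternal E hE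
end

section
/- Let d ≥ 1, let G be a real d×d matrix, and let a, b, J be nonnegative real numbers. Define the stress σ = a·J·sym(G) + b·J·(trace G)·I, where sym(G) = (G + Gᵀ)/2 and I is the d×d identity matrix. Then trace(σᵀ·G) = a·J·trace(sym(G)ᵀ·sym(G)) + b·J·(trace G)², and in particular trace(σᵀ·G) ≥ 0. -/
/-! The isotropic part of `σ` pairs with `G` to `b J (tr G)²`. For the shear part, the
symmetric matrix `S = sym G` cannot tell `G` from `Gᵀ`, since `tr (S Gᵀ) = tr ((G S)ᵀ) = tr (S G)`;
averaging the two gives `tr (S G) = tr (S S)`, a sum of squares. -/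

namespace Matrix

variable {n R : Type*} [Fintype n]

theorem IsSymm.trace_mul_transpose [CommSemiring R] {S : Matrix n n R} (hS : S.IsSymm)
    (G : Matrix n n R) : (S * Gᵀ).trace = (S * G).trace := by
  rw [← trace_transpose, transpose_mul, transpose_transpose, hS.eq, trace_mul_comm]

theorem IsSymm.trace_mul_half_smul_add_transpose [Field R] [NeZero (2 : R)]
    {S : Matrix n n R} (hS : S.IsSymm) (G : Matrix n n R) :
    (S * ((1 / 2 : R) • (G + Gᵀ))).trace = (S * G).trace := by
  rw [Matrix.mul_smul, mul_add, trace_smul, trace_add, hS.trace_mul_transpose, smul_eq_mul]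
  field_simp
  ring

theorem trace_transpose_mul_self_nonneg (A : Matrix n n ℝ) : 0 ≤ (Aᵀ * A).trace := by
  simpa [conjTranspose_eq_transpose_of_trivial] using
    (posSemidef_conjTranspose_mul_self A).trace_nonneg

end Matrix

open Matrix

theorem viscous_dissipation_nonneg_general
    (d : ℕ)
    (G : Matrix (Fin d) (Fin d) ℝ)
    (a b J : ℝ) (ha : 0 ≤ a) (hb : 0 ≤ b) (hJ : 0 ≤ J)
    (symG : Matrix (Fin d) (Fin d) ℝ)
    (hsym : symG = (1 / 2 : ℝ) • (G + G.transpose))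
    (σ : Matrix (Fin d) (Fin d) ℝ)
    (hσ : σ = (a * J) • symG + (b * J * G.trace) • (1 : Matrix (Fin d) (Fin d) ℝ)) :
    (σ.transpose * G).trace
        = a * J * (symG.transpose * symG).trace + b * J * G.trace ^ 2 ∧
      0 ≤ (σ.transpose * G).trace := by
  have hS : symG.IsSymm := hsym ▸ (isSymm_add_transpose_self G).smul _
  have hshear : (symG.transpose * G).trace = (symG.transpose * symG).trace := by
    rw [hS.eq]
    nth_rw 3 [hsym]
    exact (hS.trace_mul_half_smul_add_transpose G).symm
  have hidentity : (σ.transpose * G).trace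
      = a * J * (symG.transpose * symG).trace + b * J * G.trace ^ 2 := by
    rw [hσ, transpose_add, transpose_smul, transpose_smul, transpose_one, add_mul, smul_mul,
      smul_mul, one_mul, trace_add, trace_smul, trace_smul, smul_eq_mul, smul_eq_mul, hshear]
    ring
  refine ⟨hidentity, hidentity ▸ ?_⟩
  have := trace_transpose_mul_self_nonneg symG
  positivity

/-- nonnegativity of the viscous dissipation `σ : ∇u`:
for `σ = a·J·sym(G) + b·J·(tr G)·I` with `a, b, J ≥ 0`,
`tr(σᵀG) = a·J·tr(sym(G)ᵀ sym(G)) + b·J·(tr G)² ≥ 0`. -/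
theorem viscous_dissipation_nonneg
    (d : ℕ) (hd : 1 ≤ d)
    (G : Matrix (Fin d) (Fin d) ℝ)
    (a b J : ℝ) (ha : 0 ≤ a) (hb : 0 ≤ b) (hJ : 0 ≤ J)
    (symG : Matrix (Fin d) (Fin d) ℝ)
    (hsym : symG = (1 / 2 : ℝ) • (G + G.transpose))
    (σ : Matrix (Fin d) (Fin d) ℝ)
    (hσ : σ = (a * J) • symG + (b * J * G.trace) • (1 : Matrix (Fin d) (Fin d) ℝ)) :
    (σ.transpose * G).trace
        = a * J * (symG.transpose * symG).trace + b * J * G.trace ^ 2 ∧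
      0 ≤ (σ.transpose * G).trace :=
  viscous_dissipation_nonneg_general d G a b J ha hb hJ symG hsym σ hσ
end

section
/- Let ι be a finite index set and ω, ρ0 : ι → ℝ with ω_i > 0 and ρ0_i > 0 for all i. Let u^n, u^{n−1} : ι → ℝ^d and e^n, e^{n−1} : ι → ℝ satisfy the discrete energy balance Σ_{i∈ι} ω_i·ρ0_i·⟨u_i^n − u_i^{n−1}, u_i^n⟩ + Σ_{i∈ι} ω_i·ρ0_i·(e_i^n − e_i^{n−1}) = 0. Then the total discrete energies satisfy Σ_{i∈ι} ω_i·ρ0_i·(½‖u_i^n‖² + e_i^n) − Σ_{i∈ι} ω_i·ρ0_i·(½‖u_i^{n−1}‖² + e_i^{n−1}) = −½·Σ_{i∈ι} ω_i·ρ0_i·‖u_i^n − u_i^{n−1}‖² ≤ 0; in particular the total energy is nonincreasing from step n−1 to step n. -/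
open Finset

section EnergyBalance

variable {E : Type*} [NormedAddCommGroup E] [InnerProductSpace ℝ E]

theorem real_inner_sub_self_eq (a b : E) :
    inner ℝ (a - b) a = (1 / 2) * (‖a‖ ^ 2 - ‖b‖ ^ 2 + ‖a - b‖ ^ 2) := by
  rw [norm_sub_sq_real, inner_sub_left, real_inner_self_eq_norm_sq, real_inner_comm]
  ring

variable {ι : Type*}

noncomputable def totalEnergy (s : Finset ι) (w : ι → ℝ) (u : ι → E) (e : ι → ℝ) : ℝ :=
  ∑ i ∈ s, w i * ((1 / 2) * ‖u i‖ ^ 2 + e i)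

theorem totalEnergy_sub_totalEnergy (s : Finset ι) (w : ι → ℝ) (un um : ι → E)
    (en em : ι → ℝ) :
    totalEnergy s w un en - totalEnergy s w um em
      = (∑ i ∈ s, w i * inner ℝ (un i - um i) (un i) + ∑ i ∈ s, w i * (en i - em i))
        - (1 / 2) * ∑ i ∈ s, w i * ‖un i - um i‖ ^ 2 := by
  simp only [totalEnergy, ← sum_sub_distrib, ← sum_add_distrib, mul_sum,
    real_inner_sub_self_eq]
  refine sum_congr rfl fun i _ => ?_
  ring

end EnergyBalance

/-- energy dissipation of the backward Euler step: from the
tested discrete energy balance, the total energy decreases by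
`½ Σᵢ ωᵢ ρ0ᵢ ‖uᵢⁿ − uᵢⁿ⁻¹‖²`. -/
theorem backward_euler_energy_dissipation
    (ι : Type*) [Fintype ι] (d : ℕ)
    (ω ρ0 : ι → ℝ) (hω : ∀ i, 0 < ω i) (hρ0 : ∀ i, 0 < ρ0 i)
    (un um : ι → EuclideanSpace ℝ (Fin d)) (en em : ι → ℝ)
    (hbal : ∑ i, ω i * ρ0 i * (inner ℝ (un i - um i) (un i) : ℝ)
        + ∑ i, ω i * ρ0 i * (en i - em i) = 0) :
    (∑ i, ω i * ρ0 i * ((1 / 2) * ‖un i‖ ^ 2 + en i))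
        - (∑ i, ω i * ρ0 i * ((1 / 2) * ‖um i‖ ^ 2 + em i))
      = -(1 / 2) * ∑ i, ω i * ρ0 i * ‖un i - um i‖ ^ 2 ∧
    -(1 / 2) * (∑ i, ω i * ρ0 i * ‖un i - um i‖ ^ 2) ≤ 0 := by
  have hdiss : 0 ≤ ∑ i, ω i * ρ0 i * ‖un i - um i‖ ^ 2 :=
    sum_nonneg fun i _ => by have := hω i; have := hρ0 i; positivity
  refine ⟨?_, by linarith⟩
  have hstep := totalEnergy_sub_totalEnergy univ (fun i => ω i * ρ0 i) un um en em
  simp only [totalEnergy] at hstep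
  linarith
end

section
/- Let ι be a finite index set and ω, ρ0 : ι → ℝ with ω_i > 0 and ρ0_i > 0 for all i. Let u^{n−1}, u^{n−1/2} : ι → ℝ^d and e^{n−1}, e^{n−1/2} : ι → ℝ satisfy the half-step balance Σ_{i∈ι} ω_i·ρ0_i·⟨u_i^{n−1/2} − u_i^{n−1}, u_i^{n−1/2}⟩ + Σ_{i∈ι} ω_i·ρ0_i·(e_i^{n−1/2} − e_i^{n−1}) = 0, and define the time-filtered values u_i^n = 2u_i^{n−1/2} − u_i^{n−1} and e_i^n = 2e_i^{n−1/2} − e_i^{n−1} for all i. Then the total discrete energy is exactly conserved: Σ_{i∈ι} ω_i·ρ0_i·(½‖u_i^n‖² + e_i^n) = Σ_{i∈ι} ω_i·ρ0_i·(½‖u_i^{n−1}‖² + e_i^{n−1}). -/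
/-! The time filter `uⁿ = 2 u^{n-1/2} - u^{n-1}` makes the half step exactly half of the full
step, and polarization turns the backward-Euler test term `⟪u^{n-1/2} - u^{n-1}, u^{n-1/2}⟫`
into a quarter of the kinetic-energy increment `‖uⁿ‖² - ‖u^{n-1}‖²`. Hence, node by node, the
weighted energy increment is twice the tested half-step balance, which sums to zero. -/

open Finset RealInnerProductSpace

section InnerProductSpace

variable {E : Type*} [NormedAddCommGroup E] [InnerProductSpace ℝ E]

theorem norm_two_smul_sub_sq_sub_norm_sq (x y : E) :
    ‖(2 : ℝ) • y - x‖ ^ 2 - ‖x‖ ^ 2 = 4 * ⟪y - x, y⟫ := by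
  rw [norm_sub_sq_real, norm_smul, real_inner_smul_left, Real.norm_two, inner_sub_left,
    real_inner_comm x y, real_inner_self_eq_norm_sq]
  ring

theorem weighted_energy_time_filter (c a b : ℝ) (x y : E) :
    c * ((1 / 2) * ‖(2 : ℝ) • y - x‖ ^ 2 + (2 * b - a))
      = c * ((1 / 2) * ‖x‖ ^ 2 + a) + 2 * (c * ⟪y - x, y⟫ + c * (b - a)) := by
  linear_combination (c / 2) * norm_two_smul_sub_sq_sub_norm_sq x y

end InnerProductSpace

theorem midpoint_rule_energy_conservation_general
    (ι : Type*) [Fintype ι] (d : ℕ)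
    (ω ρ0 : ι → ℝ)
    (um uh : ι → EuclideanSpace ℝ (Fin d)) (em eh : ι → ℝ)
    (hbal : ∑ i, ω i * ρ0 i * (inner ℝ (uh i - um i) (uh i) : ℝ)
        + ∑ i, ω i * ρ0 i * (eh i - em i) = 0)
    (un : ι → EuclideanSpace ℝ (Fin d)) (en : ι → ℝ)
    (hun : ∀ i, un i = (2 : ℝ) • uh i - um i)
    (hen : ∀ i, en i = 2 * eh i - em i) :
    ∑ i, ω i * ρ0 i * ((1 / 2) * ‖un i‖ ^ 2 + en i)
      = ∑ i, ω i * ρ0 i * ((1 / 2) * ‖um i‖ ^ 2 + em i) := by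
  have hstep : ∀ i, ω i * ρ0 i * ((1 / 2) * ‖un i‖ ^ 2 + en i)
      = ω i * ρ0 i * ((1 / 2) * ‖um i‖ ^ 2 + em i)
        + 2 * (ω i * ρ0 i * ⟪uh i - um i, uh i⟫ + ω i * ρ0 i * (eh i - em i)) := fun i => by
    rw [hun i, hen i]
    exact weighted_energy_time_filter _ _ _ _ _
  rw [sum_congr rfl fun i _ => hstep i, sum_add_distrib, ← mul_sum, sum_add_distrib, hbal,
    mul_zero, add_zero]

/-- exact energy conservation of the midpoint rule implemented
as backward Euler half step followed by the time filter (extrapolation). -/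
theorem midpoint_rule_energy_conservation
    (ι : Type*) [Fintype ι] (d : ℕ)
    (ω ρ0 : ι → ℝ) (hω : ∀ i, 0 < ω i) (hρ0 : ∀ i, 0 < ρ0 i)
    (um uh : ι → EuclideanSpace ℝ (Fin d)) (em eh : ι → ℝ)
    (hbal : ∑ i, ω i * ρ0 i * (inner ℝ (uh i - um i) (uh i) : ℝ)
        + ∑ i, ω i * ρ0 i * (eh i - em i) = 0)
    (un : ι → EuclideanSpace ℝ (Fin d)) (en : ι → ℝ)
    (hun : ∀ i, un i = (2 : ℝ) • uh i - um i)
    (hen : ∀ i, en i = 2 * eh i - em i) :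
    ∑ i, ω i * ρ0 i * ((1 / 2) * ‖un i‖ ^ 2 + en i)
      = ∑ i, ω i * ρ0 i * ((1 / 2) * ‖um i‖ ^ 2 + em i) :=
  midpoint_rule_energy_conservation_general ι d ω ρ0 um uh em eh hbal un en hun hen
end

section
/- Let ψ : ℝ → ℝ be differentiable on (0, ∞), let ι be a finite index set, and ω, ρ0 : ι → ℝ with ω_i > 0 and ρ0_i > 0 for all i. For each i ∈ ι let J_i : ℝ → ℝ be differentiable with J_i(t) > 0 and J_i'(t) = J_i(t)·D_i(t) for all t, let u_i : ℝ → ℝ^d be differentiable, and define ρ_i(t) = ρ0_i/J_i(t) and p_i(t) = ψ'(ρ_i(t))·ρ_i(t) − ψ(ρ_i(t)). Suppose the momentum equation tested with the velocity holds: Σ_{i∈ι} ω_i·ρ0_i·⟨u_i'(t), u_i(t)⟩ = Σ_{i∈ι} ω_i·p_i(t)·J_i(t)·D_i(t) − Σ_{i∈ι} ω_i·W_i(t) for all t, with W_i(t) ≥ 0 for all i and t. Then the total discrete entropy functional E(t) = Σ_{i∈ι} ω_i·(½·ρ0_i·‖u_i(t)‖² + ψ(ρ_i(t))·J_i(t))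 is differentiable with E'(t) = −Σ_{i∈ι} ω_i·W_i(t) ≤ 0 for all t; in particular E is nonincreasing. -/
/-!
With `ρ = ρ0 / J` and `J' = J D` one gets `ρ' = -ρ D`, so the free energy carried by a node
satisfies `(ψ(ρ) J)' = ψ'(ρ)(-ρ D) J + ψ(ρ) J D = -p J D`: it is exactly the pressure work.
The kinetic energy changes by `ρ0 ⟪u', u⟫`, and the momentum equation tested with `u` says
that the total kinetic power equals the total pressure work minus the viscous dissipation.
Summing, `E' = -∑ ω W`, which is nonpositive because `ω, W ≥ 0`.
-/

open Finset

section Nodal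

variable {J ψ : ℝ → ℝ} {c D t : ℝ}

theorem HasDerivAt.const_div_of_hasDerivAt_mul (hJ : HasDerivAt J (J t * D) t)
    (hJt : J t ≠ 0) : HasDerivAt (fun s => c / J s) (-(c / J t * D)) t := by
  refine ((hasDerivAt_const t c).div hJ hJt).congr_deriv ?_
  field_simp
  ring

theorem hasDerivAt_free_energy_mul_jacobian (hψ : DifferentiableAt ℝ ψ (c / J t))
    (hJ : HasDerivAt J (J t * D) t) (hJt : J t ≠ 0) :
    HasDerivAt (fun s => ψ (c / J s) * J s)
      (-((deriv ψ (c / J t) * (c / J t) - ψ (c / J t)) * J t * D)) t := by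
  refine ((hψ.hasDerivAt.comp t (hJ.const_div_of_hasDerivAt_mul hJt)).mul hJ).congr_deriv ?_
  rw [Function.comp_apply]
  ring

theorem hasDerivAt_nodal_energy {F : Type*} [NormedAddCommGroup F] [InnerProductSpace ℝ F]
    {u : ℝ → F} (m : ℝ) (hu : DifferentiableAt ℝ u t) (hψ : DifferentiableAt ℝ ψ (c / J t))
    (hJ : HasDerivAt J (J t * D) t) (hJt : J t ≠ 0) :
    HasDerivAt (fun s => 1 / 2 * m * ‖u s‖ ^ 2 + ψ (c / J s) * J s)
      (m * inner ℝ (deriv u t) (u t)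
        - (deriv ψ (c / J t) * (c / J t) - ψ (c / J t)) * J t * D) t := by
  refine ((hu.hasDerivAt.norm_sq.const_mul (1 / 2 * m)).add
    (hasDerivAt_free_energy_mul_jacobian hψ hJ hJt)).congr_deriv ?_
  rw [real_inner_comm]
  ring

end Nodal

theorem hasDerivAt_total_energy {ι F : Type*} [Fintype ι] [NormedAddCommGroup F]
    [InnerProductSpace ℝ F] {ψ : ℝ → ℝ} {ω ρ0 : ι → ℝ} {J D : ι → ℝ → ℝ} {u : ι → ℝ → F}
    {t : ℝ} (hu : ∀ i, DifferentiableAt ℝ (u i) t)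
    (hψ : ∀ i, DifferentiableAt ℝ ψ (ρ0 i / J i t))
    (hJ : ∀ i, HasDerivAt (J i) (J i t * D i t) t) (hJt : ∀ i, J i t ≠ 0) :
    HasDerivAt (fun s => ∑ i, ω i * (1 / 2 * ρ0 i * ‖u i s‖ ^ 2 + ψ (ρ0 i / J i s) * J i s))
      (∑ i, ω i * ρ0 i * inner ℝ (deriv (u i) t) (u i t)
        - ∑ i, ω i * (deriv ψ (ρ0 i / J i t) * (ρ0 i / J i t) - ψ (ρ0 i / J i t))
            * J i t * D i t) t := by
  refine (HasDerivAt.fun_sum fun i _ =>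
    (hasDerivAt_nodal_energy (ρ0 i) (hu i) (hψ i) (hJ i) (hJt i)).const_mul (ω i)).congr_deriv ?_
  rw [← sum_sub_distrib]
  exact sum_congr rfl fun i _ => by ring

/-- entropy stability of the isothermal variational Lagrangian
scheme: the total discrete entropy functional
`E(t) = Σᵢ ωᵢ (½ ρ0ᵢ ‖uᵢ‖² + ψ(ρᵢ)·Jᵢ)` satisfies `E' = −Σᵢ ωᵢ Wᵢ ≤ 0`,
hence `E` is nonincreasing. -/
theorem isothermal_entropy_stability
    (ψ : ℝ → ℝ) (hψ : DifferentiableOn ℝ ψ (Set.Ioi 0))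
    (ι : Type*) [Fintype ι] (d : ℕ)
    (ω ρ0 : ι → ℝ) (hω : ∀ i, 0 < ω i) (hρ0 : ∀ i, 0 < ρ0 i)
    (J D W : ι → ℝ → ℝ)
    (hJpos : ∀ i t, 0 < J i t)
    (hJ : ∀ i t, HasDerivAt (J i) (J i t * D i t) t)
    (u : ι → ℝ → EuclideanSpace ℝ (Fin d))
    (hudiff : ∀ i, Differentiable ℝ (u i))
    (ρ p : ι → ℝ → ℝ)
    (hρ : ∀ i t, ρ i t = ρ0 i / J i t)
    (hp : ∀ i t, p i t = deriv ψ (ρ i t) * ρ i t - ψ (ρ i t))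
    (hmom : ∀ t, ∑ i, ω i * ρ0 i * (inner ℝ (deriv (u i) t) (u i t) : ℝ)
        = ∑ i, ω i * p i t * J i t * D i t - ∑ i, ω i * W i t)
    (hW : ∀ i t, 0 ≤ W i t)
    (E : ℝ → ℝ)
    (hE : ∀ t, E t = ∑ i, ω i * ((1 / 2) * ρ0 i * ‖u i t‖ ^ 2 + ψ (ρ i t) * J i t)) :
    (∀ t, HasDerivAt E (-∑ i, ω i * W i t) t) ∧
    (∀ t, -∑ i, ω i * W i t ≤ 0) ∧
    Antitone E := by
  obtain rfl : ρ = fun i t => ρ0 i / J i t := funext₂ hρ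
  obtain rfl : p = fun i t => deriv ψ (ρ0 i / J i t) * (ρ0 i / J i t) - ψ (ρ0 i / J i t) :=
    funext₂ hp
  beta_reduce at hmom hE
  have hE' : ∀ t, HasDerivAt E (-∑ i, ω i * W i t) t := fun t => by
    rw [funext hE]
    have h := hasDerivAt_total_energy (ω := ω) (fun i => hudiff i t)
      (fun i => hψ.differentiableAt (Ioi_mem_nhds (div_pos (hρ0 i) (hJpos i t))))
      (fun i => hJ i t) (fun i => (hJpos i t).ne')
    rwa [hmom t, sub_sub_cancel_left] at h
  have hdissipation : ∀ t, -∑ i, ω i * W i t ≤ 0 := fun t =>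
    neg_nonpos.mpr (sum_nonneg fun i _ => mul_nonneg (hω i).le (hW i t))
  exact ⟨hE', hdissipation, antitone_of_hasDerivAt_nonpos hE' hdissipation⟩
end
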